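/- Let P be the path v_1 v_2 v_3 v_4 v_5 on 5 vertices, let k ≥ 1 and c ∈ [k], and let x̄ ∈ ℝ^{5k} be the vector with x̄_{v_1,c} = x̄_{v_3,c} = x̄_{v_5,c} = 1/2 and all other entries 0. Then x̄ satisfies all cover inequalities Σ_c x_{v,c} ≤ 1, all nonnegativity constraints, and all connectivity inequalities x_{u,c} + x_{w,c} − Σ_{z∈Z} x_{z,c} ≤ 1 for minimal separators Z of non-adjacent pairs {u,w}; but x̄ violates the inequality x_{v_1,c} + x_{v_3,c} + x_{v_5,c} − x_{v_2,c} − x_{v_4,c} ≤ 1, which is valid for all incidence vectors of connected k-subpartitions of P. -/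

import Mathlib

/-!
The fractional point `x̄` has entries in `[0, 1/2]`, all supported on colour `c`, so the cover and
connectivity inequalities hold with room to spare, while `x̄` gives the left side of the new
inequality the value `3/2`. For validity: the path is the Hasse diagram of `Fin 5`, and a vertex set
inducing a connected subgraph of a Hasse diagram is order-convex, since a walk cannot step over a
missing vertex. A convex set containing two of `v₁, v₃, v₅` contains the vertex between them.
-/

open scoped Classical

/-- `Z` is a `u,v`-separator in `G`. -/
def IsSep {V : Type*} (G : SimpleGraph V) (u v : V) (Z : Set V) : Prop :=
  Z ⊆ ({u, v} : Set V)ᶜ ∧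
    ∀ (hu : u ∈ Zᶜ) (hv : v ∈ Zᶜ),
      ¬ (G.induce Zᶜ).Reachable ⟨u, hu⟩ ⟨v, hv⟩

/-- A connected `k`-subpartition of `G`. -/
def ConnKSub {V : Type*} (G : SimpleGraph V) (k : ℕ) (P : Fin k → Set V) : Prop :=
  (∀ i j, i ≠ j → Disjoint (P i) (P j)) ∧
    ∀ i, P i = ∅ ∨ (G.induce (P i)).Connected

/-- The path `v₁v₂v₃v₄v₅` on five vertices `0,…,4`. -/
def Path5 : SimpleGraph (Fin 5) :=
  SimpleGraph.fromEdgeSet {s(0, 1), s(1, 2), s(2, 3), s(3, 4)}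

open SimpleGraph

theorem path5_eq_pathGraph : Path5 = pathGraph 5 := by
  ext u v
  simp only [Path5, fromEdgeSet_adj, Set.mem_insert_iff, Set.mem_singleton_iff, pathGraph_adj]
  fin_cases u <;> fin_cases v <;> simp

theorem SimpleGraph.Walk.lt_of_lt_of_notMem {α : Type*} [LinearOrder α] {S : Set α} {m : α}
    (hm : m ∉ S) {a b : S} (p : ((hasse α).induce S).Walk a b) (ha : (a : α) < m) :
    (b : α) < m := by
  induction p with
  | nil => exact ha
  | @cons u x w hux _ ih =>
    refine ih ?_
    have hxm : (x : α) ≠ m := fun h => hm (h ▸ x.2)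
    rcases hasse_adj.mp hux with hcov | hcov
    · exact lt_of_le_of_ne (not_lt.mp fun hmx => hcov.2 ha hmx) hxm
    · exact hcov.1.trans ha

theorem ordConnected_of_induce_hasse_preconnected {α : Type*} [LinearOrder α] {S : Set α}
    (hS : ((hasse α).induce S).Preconnected) : S.OrdConnected := by
  refine ⟨fun a ha b hb m ⟨ham, hmb⟩ => ?_⟩
  by_contra hm
  rcases ham.lt_or_eq with ham | rfl
  · rcases hmb.lt_or_eq with hmb | rfl
    · obtain ⟨p⟩ := hS ⟨a, ha⟩ ⟨b, hb⟩
      exact (p.lt_of_lt_of_notMem hm ham).not_gt hmb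
    · exact hm hb
  · exact hm ha

theorem ordConnected_of_connKSub_path5 {k : ℕ} {P : Fin k → Set (Fin 5)}
    (hP : ConnKSub Path5 k P) (i : Fin k) : (P i).OrdConnected := by
  rcases hP.2 i with h | h
  · rw [h]; exact Set.ordConnected_empty
  · rw [path5_eq_pathGraph] at h
    exact ordConnected_of_induce_hasse_preconnected h.preconnected

theorem alternating_count_le_one {S : Set (Fin 5)} (hS : S.OrdConnected) :
    ((if (0 : Fin 5) ∈ S then (1 : ℝ) else 0) + (if (2 : Fin 5) ∈ S then 1 else 0) +
      (if (4 : Fin 5) ∈ S then 1 else 0) - (if (1 : Fin 5) ∈ S then 1 else 0) -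
      (if (3 : Fin 5) ∈ S then 1 else 0)) ≤ 1 := by
  have h₁ : (0 : Fin 5) ∈ S → (2 : Fin 5) ∈ S → (1 : Fin 5) ∈ S :=
    fun h0 h2 => hS.out h0 h2 ⟨by decide, by decide⟩
  have h₃ : (2 : Fin 5) ∈ S → (4 : Fin 5) ∈ S → (3 : Fin 5) ∈ S :=
    fun h2 h4 => hS.out h2 h4 ⟨by decide, by decide⟩
  have h₂ : (0 : Fin 5) ∈ S → (4 : Fin 5) ∈ S → (2 : Fin 5) ∈ S :=
    fun h0 h4 => hS.out h0 h4 ⟨by decide, by decide⟩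
  split_ifs <;> norm_num <;> tauto

theorem stmt11_general (k : ℕ) (c : Fin k) (xb : Fin 5 → Fin k → ℝ)
    (hxb : ∀ v c', xb v c' =
      if c' = c ∧ (v = 0 ∨ v = 2 ∨ v = 4) then 1 / 2 else 0) :
    (∀ v : Fin 5, ∑ c' : Fin k, xb v c' ≤ 1) ∧
      (∀ (v : Fin 5) (c' : Fin k), 0 ≤ xb v c') ∧
      (∀ u w : Fin 5, u ≠ w → ¬ Path5.Adj u w →
        ∀ Z : Finset (Fin 5),
          (IsSep Path5 u w (↑Z : Set (Fin 5)) ∧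
            ∀ Z' ⊆ Z, Z' ≠ Z → ¬ IsSep Path5 u w (↑Z' : Set (Fin 5))) →
          ∀ c' : Fin k, xb u c' + xb w c' - ∑ z ∈ Z, xb z c' ≤ 1) ∧
      (1 < xb 0 c + xb 2 c + xb 4 c - xb 1 c - xb 3 c) ∧
      (∀ P : Fin k → Set (Fin 5), ConnKSub Path5 k P →
        ((if (0 : Fin 5) ∈ P c then (1 : ℝ) else 0) +
            (if (2 : Fin 5) ∈ P c then 1 else 0) +
            (if (4 : Fin 5) ∈ P c then 1 else 0) -
            (if (1 : Fin 5) ∈ P c then 1 else 0) -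
            (if (3 : Fin 5) ∈ P c then 1 else 0)) ≤ 1) := by
  have hnn : ∀ v c', 0 ≤ xb v c' := fun v c' => by rw [hxb]; split_ifs <;> norm_num
  have hle : ∀ v c', xb v c' ≤ 1 / 2 := fun v c' => by rw [hxb]; split_ifs <;> norm_num
  refine ⟨fun v => ?_, hnn, fun u w _ _ Z _ c' => ?_, ?_, fun P hP => ?_⟩
  · have hsum : ∑ c' : Fin k, xb v c' = xb v c :=
      Finset.sum_eq_single c (fun c' _ hc' => by simp [hxb, hc']) (by simp)
    linarith [hle v c]
  · linarith [hle u c', hle w c', Finset.sum_nonneg fun z (_ : z ∈ Z) => hnn z c']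
  · norm_num [hxb, Fin.ext_iff]
  · exact alternating_count_le_one (ordConnected_of_connKSub_path5 hP c)

theorem stmt11 (k : ℕ) (hk : 1 ≤ k) (c : Fin k) (xb : Fin 5 → Fin k → ℝ)
    (hxb : ∀ v c', xb v c' =
      if c' = c ∧ (v = 0 ∨ v = 2 ∨ v = 4) then 1 / 2 else 0) :
    (∀ v : Fin 5, ∑ c' : Fin k, xb v c' ≤ 1) ∧
      (∀ (v : Fin 5) (c' : Fin k), 0 ≤ xb v c') ∧
      (∀ u w : Fin 5, u ≠ w → ¬ Path5.Adj u w →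
        ∀ Z : Finset (Fin 5),
          (IsSep Path5 u w (↑Z : Set (Fin 5)) ∧
            ∀ Z' ⊆ Z, Z' ≠ Z → ¬ IsSep Path5 u w (↑Z' : Set (Fin 5))) →
          ∀ c' : Fin k, xb u c' + xb w c' - ∑ z ∈ Z, xb z c' ≤ 1) ∧
      (1 < xb 0 c + xb 2 c + xb 4 c - xb 1 c - xb 3 c) ∧
      (∀ P : Fin k → Set (Fin 5), ConnKSub Path5 k P →
        ((if (0 : Fin 5) ∈ P c then (1 : ℝ) else 0) +
            (if (2 : Fin 5) ∈ P c then 1 else 0) +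
            (if (4 : Fin 5) ∈ P c then 1 else 0) -
            (if (1 : Fin 5) ∈ P c then 1 else 0) -
            (if (3 : Fin 5) ∈ P c then 1 else 0)) ≤ 1) :=
  stmt11_general k c xb hxb
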